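/- arXiv:2507.23502 — 2 statements merged into one kernel-verified Lean document; each statement's English description precedes it below -/
import Mathlib

section
/- Let F(ξ) = -2 e^{-8(Re ξ)² - 8i Re ξ Im ξ} + 4√π ξ e^{-4|ξ|²} erfc(2ξ) + π e^{-8(Im ξ)² + 8i Re ξ Im ξ} erfc(2ξ)², defined for ξ ∈ ℂ. Then F is bounded on ℂ. -/
open Complex MeasureTheory

/-- The complementary error function `erfc(z) = (2/√π) ∫_z^∞ e^{-t²} dt`, extended to the
complex plane via the contour `t = z + u`, `u ∈ (0,∞)`. -/
noncomputable def erfc (z : ℂ) : ℂ :=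
  (2 / Real.sqrt Real.pi) * ∫ u in Set.Ioi (0 : ℝ), Complex.exp (-(z + u) ^ 2)

open Set Filter

lemma re_eq (z : ℂ) (u : ℝ) : (-(z + u) ^ 2).re = z.im ^ 2 - (z.re + u) ^ 2 := by
  simp [pow_two, Complex.mul_re]

lemma norm_exp_eq (z : ℂ) (u : ℝ) :
    ‖Complex.exp (-(z + u) ^ 2)‖ = Real.exp (z.im ^ 2 - (z.re + u) ^ 2) := by
  rw [Complex.norm_exp, re_eq]

lemma norm_exp_le (z : ℂ) (u : ℝ) :
    ‖Complex.exp (-(z + u) ^ 2)‖ ≤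
      Real.exp (z.re ^ 2 + z.im ^ 2) * Real.exp (-(1/2) * u ^ 2) := by
  rw [norm_exp_eq, ← Real.exp_add]
  apply Real.exp_le_exp.2
  nlinarith [sq_nonneg (2 * z.re + u)]

lemma norm_mul_exp_le (z : ℂ) (u : ℝ) :
    ‖(u : ℂ) * Complex.exp (-(z + u) ^ 2)‖ ≤
      Real.exp (z.re ^ 2 + z.im ^ 2) * Real.exp (-(1/4) * u ^ 2) := by
  rw [norm_mul, norm_exp_eq]
  have h1 : |u| ≤ Real.exp ((1/4) * u ^ 2) := by
    have := Real.add_one_le_exp ((1/4) * u ^ 2)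
    nlinarith [abs_nonneg u, _root_.sq_abs u, sq_nonneg (|u| - 2)]
  calc ‖(u:ℂ)‖ * Real.exp (z.im ^ 2 - (z.re + u) ^ 2)
      ≤ Real.exp ((1/4) * u ^ 2) * Real.exp (z.im ^ 2 - (z.re + u) ^ 2) := by
        apply mul_le_mul_of_nonneg_right _ (Real.exp_nonneg _)
        simpa using h1
    _ ≤ Real.exp (z.re ^ 2 + z.im ^ 2) * Real.exp (-(1/4) * u ^ 2) := by
        rw [← Real.exp_add, ← Real.exp_add]
        apply Real.exp_le_exp.2
        nlinarith [sq_nonneg (2 * z.re + u)]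

lemma integrable_exp' (z : ℂ) :
    Integrable (fun u : ℝ => Complex.exp (-(z + u) ^ 2)) := by
  apply Integrable.mono' (((integrable_exp_neg_mul_sq (by norm_num : (0:ℝ) < 1/2)).const_mul
    (Real.exp (z.re ^ 2 + z.im ^ 2))))
  · apply Continuous.aestronglyMeasurable
    continuity
  · exact Eventually.of_forall (norm_exp_le z)

lemma integrable_mul_exp' (z : ℂ) :
    Integrable (fun u : ℝ => (u : ℂ) * Complex.exp (-(z + u) ^ 2)) := by
  apply Integrable.mono' (((integrable_exp_neg_mul_sq (by norm_num : (0:ℝ) < 1/4)).const_mul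
    (Real.exp (z.re ^ 2 + z.im ^ 2))))
  · apply Continuous.aestronglyMeasurable
    continuity
  · exact Eventually.of_forall (norm_mul_exp_le z)

lemma key (z : ℂ) :
    ∫ u in Set.Ioi (0:ℝ), (2 * (z + u)) * Complex.exp (-(z + u) ^ 2)
      = Complex.exp (-z ^ 2) := by
  have hderiv : ∀ u : ℝ, HasDerivAt (fun u : ℝ => -Complex.exp (-(z + u) ^ 2))
      ((2 * (z + u)) * Complex.exp (-(z + u) ^ 2)) u := by
    intro u
    have h0 : HasDerivAt (fun u : ℝ => z + (u : ℂ)) 1 u := by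
      simpa using (Complex.ofRealCLM.hasDerivAt (x := u)).const_add z
    have h1 : HasDerivAt (fun u : ℝ => -(z + (u : ℂ)) ^ 2) (-(2 * (z + u))) u := by
      have h : HasDerivAt (fun u : ℝ => -((z + (u:ℂ)) * (z + u))) (-(1 * (z + ↑u) + (z + ↑u) * 1)) u := (h0.mul h0).neg
      have heq : (fun u : ℝ => -((z + (u:ℂ)) * (z + u))) = (fun u : ℝ => -(z + (u:ℂ)) ^ 2) := by
        funext v; ring
      rw [heq] at h
      convert h using 1; ring
    have h2 : HasDerivAt (fun u : ℝ => Complex.exp (-(z + (u:ℂ)) ^ 2))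
        (Complex.exp (-(z + (u:ℂ)) ^ 2) * (-(2 * (z + u)))) u := h1.cexp
    have : HasDerivAt (fun u : ℝ => -Complex.exp (-(z + (u:ℂ)) ^ 2)) (-(Complex.exp (-(z + (u:ℂ)) ^ 2) * (-(2 * (z + u))))) u := h2.neg
    convert this using 1
    ring
  have hint : IntegrableOn (fun u : ℝ =>
      (2 * (z + u)) * Complex.exp (-(z + u) ^ 2)) (Set.Ioi (0:ℝ)) := by
    have : (fun u : ℝ => (2 * (z + u)) * Complex.exp (-(z + u) ^ 2))
        = fun u : ℝ => (2 * z) * Complex.exp (-(z + u) ^ 2)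
            + 2 * ((u : ℂ) * Complex.exp (-(z + u) ^ 2)) := by
      funext u; ring
    rw [this]
    exact (((integrable_exp' z).const_mul _).add
      ((integrable_mul_exp' z).const_mul 2)).integrableOn
  have htends : Tendsto (fun u : ℝ => -Complex.exp (-(z + u) ^ 2)) atTop (nhds 0) := by
    rw [tendsto_zero_iff_norm_tendsto_zero]
    have h2 : Tendsto (fun u : ℝ => z.im ^ 2 - (z.re + u) ^ 2) atTop atBot := by
      apply tendsto_atBot_add_const_left
      apply Filter.Tendsto.comp tendsto_neg_atTop_atBot
      exact (tendsto_pow_atTop (by norm_num : (2:ℕ) ≠ 0)).comp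
        (tendsto_atTop_add_const_left _ _ tendsto_id)
    have := Real.tendsto_exp_atBot.comp h2
    apply this.congr
    intro u
    simp only [Function.comp]
    rw [norm_neg, norm_exp_eq]
  have := integral_Ioi_of_hasDerivAt_of_tendsto
    (f := fun u : ℝ => -Complex.exp (-(z + u) ^ 2))
    (f' := fun u : ℝ => (2 * (z + u)) * Complex.exp (-(z + u) ^ 2))
    (a := 0) (m := 0)
    (hderiv 0).continuousAt.continuousWithinAt (fun x _ => hderiv x) hint htends
  rw [this]
  push_cast
  simp

lemma gauss_tail_le (a : ℝ) :
    ∫ u in Set.Ioi (0:ℝ), Real.exp (-(a + u) ^ 2) ≤ Real.sqrt Real.pi := by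
  have hfun : (fun u : ℝ => Real.exp (-(a + u) ^ 2))
      = fun u : ℝ => Real.exp (-1 * (u + a) ^ 2) := by
    funext u; ring_nf
  have hi : Integrable (fun u : ℝ => Real.exp (-(a + u) ^ 2)) := by
    rw [hfun]
    exact (integrable_exp_neg_mul_sq one_pos).comp_add_right a
  calc ∫ u in Set.Ioi (0:ℝ), Real.exp (-(a + u) ^ 2)
      ≤ ∫ u : ℝ, Real.exp (-(a + u) ^ 2) :=
        setIntegral_le_integral hi (Eventually.of_forall fun u => (Real.exp_nonneg _))
    _ = ∫ u : ℝ, Real.exp (-1 * u ^ 2) := by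
        rw [hfun]
        exact integral_add_right_eq_self (fun t : ℝ => Real.exp (-1 * t ^ 2)) a
    _ ≤ Real.sqrt Real.pi := by
        rw [integral_gaussian]
        simp

lemma J_bound (z : ℂ) :
    ‖∫ u in Set.Ioi (0:ℝ), Complex.exp (-(z + u) ^ 2)‖ ≤
      Real.sqrt Real.pi * Real.exp (z.im ^ 2) := by
  calc ‖∫ u in Set.Ioi (0:ℝ), Complex.exp (-(z + u) ^ 2)‖
      ≤ ∫ u in Set.Ioi (0:ℝ), ‖Complex.exp (-(z + u) ^ 2)‖ :=
        norm_integral_le_integral_norm _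
    _ = ∫ u in Set.Ioi (0:ℝ), Real.exp (z.im ^ 2) * Real.exp (-(z.re + u) ^ 2) := by
        congr 1; funext u
        rw [norm_exp_eq, ← Real.exp_add]; ring_nf
    _ = Real.exp (z.im ^ 2) * ∫ u in Set.Ioi (0:ℝ), Real.exp (-(z.re + u) ^ 2) := by
        rw [integral_const_mul]
    _ ≤ Real.exp (z.im ^ 2) * Real.sqrt Real.pi := by
        exact mul_le_mul_of_nonneg_left (gauss_tail_le z.re) (Real.exp_nonneg _)
    _ = Real.sqrt Real.pi * Real.exp (z.im ^ 2) := mul_comm _ _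

lemma K_bound (z : ℂ) :
    ‖∫ u in Set.Ioi (0:ℝ), (u : ℂ) * Complex.exp (-(z + u) ^ 2)‖ ≤
      Real.sqrt (4 * Real.pi) * Real.exp (z.re ^ 2 + z.im ^ 2) := by
  have hig : Integrable (fun u : ℝ =>
      Real.exp (z.re ^ 2 + z.im ^ 2) * Real.exp (-(1/4) * u ^ 2)) :=
    (integrable_exp_neg_mul_sq (by norm_num : (0:ℝ) < 1/4)).const_mul _
  calc ‖∫ u in Set.Ioi (0:ℝ), (u : ℂ) * Complex.exp (-(z + u) ^ 2)‖
      ≤ ∫ u in Set.Ioi (0:ℝ), ‖(u : ℂ) * Complex.exp (-(z + u) ^ 2)‖ :=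
        norm_integral_le_integral_norm _
    _ ≤ ∫ u in Set.Ioi (0:ℝ), Real.exp (z.re ^ 2 + z.im ^ 2) * Real.exp (-(1/4) * u ^ 2) := by
        apply setIntegral_mono_on ((integrable_mul_exp' z).norm.integrableOn)
          hig.integrableOn measurableSet_Ioi
        exact fun u _ => norm_mul_exp_le z u
    _ ≤ ∫ u : ℝ, Real.exp (z.re ^ 2 + z.im ^ 2) * Real.exp (-(1/4) * u ^ 2) :=
        setIntegral_le_integral hig (Eventually.of_forall fun u => by positivity)
    _ = Real.exp (z.re ^ 2 + z.im ^ 2) * Real.sqrt (Real.pi / (1/4)) := by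
        rw [integral_const_mul, integral_gaussian]
    _ = Real.sqrt (4 * Real.pi) * Real.exp (z.re ^ 2 + z.im ^ 2) := by
        rw [mul_comm]; congr 2; ring

/-- The function
`F(ξ) = -2 e^{-8(Re ξ)² - 8i Re ξ Im ξ} + 4√π ξ e^{-4|ξ|²} erfc(2ξ)
        + π e^{-8(Im ξ)² + 8i Re ξ Im ξ} erfc(2ξ)²`. -/
noncomputable def F (ξ : ℂ) : ℂ :=
  -2 * Complex.exp (((-8 * ξ.re ^ 2 : ℝ) : ℂ) - 8 * Complex.I * ξ.re * ξ.im)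
    + 4 * Real.sqrt Real.pi * ξ * Complex.exp (((-4 * ‖ξ‖ ^ 2 : ℝ) : ℂ))
        * erfc (2 * ξ)
    + Real.pi * Complex.exp (((-8 * ξ.im ^ 2 : ℝ) : ℂ) + 8 * Complex.I * ξ.re * ξ.im)
        * erfc (2 * ξ) ^ 2

/-- `F` is bounded on `ℂ`. -/
theorem F_bounded : ∃ C > 0, ∀ ξ : ℂ, ‖F ξ‖ ≤ C := by
  refine ⟨4 * Real.pi + 4 * Real.sqrt (4 * Real.pi), by positivity, fun ξ => ?_⟩
  set J : ℂ := ∫ u in Set.Ioi (0:ℝ), Complex.exp (-(2 * ξ + u) ^ 2) with hJdef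
  set K : ℂ := ∫ u in Set.Ioi (0:ℝ), (u : ℂ) * Complex.exp (-(2 * ξ + u) ^ 2) with hKdef
  have hid : 4 * ξ * J + 2 * K = Complex.exp (-(4 * ξ ^ 2)) := by
    have h := key (2 * ξ)
    have hsplit : (fun u : ℝ => (2 * (2 * ξ + u)) * Complex.exp (-(2 * ξ + u) ^ 2))
        = fun u : ℝ => (4 * ξ) * Complex.exp (-(2 * ξ + u) ^ 2)
            + 2 * ((u : ℂ) * Complex.exp (-(2 * ξ + u) ^ 2)) := by
      funext u; ring
    rw [hsplit] at h
    rw [integral_add (((integrable_exp' (2*ξ)).integrableOn).const_mul _)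
      (((integrable_mul_exp' (2*ξ)).integrableOn).const_mul _),
      integral_const_mul, integral_const_mul, ← hJdef, ← hKdef] at h
    rw [show (-(2*ξ)^2 : ℂ) = -(4 * ξ ^ 2) from by ring] at h
    linear_combination h
  have hπ2 : ((Real.sqrt Real.pi : ℝ) : ℂ) ^ 2 = (Real.pi : ℂ) := by
    rw [← Complex.ofReal_pow, Real.sq_sqrt Real.pi_pos.le]
  have hπ0 : ((Real.sqrt Real.pi : ℝ) : ℂ) ≠ 0 := by
    rw [Complex.ofReal_ne_zero]
    exact Real.sqrt_ne_zero'.mpr Real.pi_pos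
  have habs : (‖ξ‖ : ℝ) ^ 2 = ξ.re ^ 2 + ξ.im ^ 2 := by
    rw [Complex.sq_norm, Complex.normSq_apply]; ring
  have he1 : Complex.exp (((-8 * ξ.re ^ 2 : ℝ) : ℂ) - 8 * Complex.I * ξ.re * ξ.im)
      = Complex.exp (((-4 * ‖ξ‖ ^ 2 : ℝ) : ℂ)) * Complex.exp (-(4 * ξ ^ 2)) := by
    rw [← Complex.exp_add]
    congr 1
    rw [habs]
    apply Complex.ext <;> simp [Complex.mul_re, Complex.mul_im, pow_two] <;> ring
  have he3 : Complex.exp (((-8 * ξ.im ^ 2 : ℝ) : ℂ) + 8 * Complex.I * ξ.re * ξ.im)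
      = Complex.exp (((-4 * ‖ξ‖ ^ 2 : ℝ) : ℂ)) * Complex.exp (4 * ξ ^ 2) := by
    rw [← Complex.exp_add]
    congr 1
    rw [habs]
    apply Complex.ext <;> simp [Complex.mul_re, Complex.mul_im, pow_two] <;> ring
  have hF : F ξ = Complex.exp (((-4 * ‖ξ‖ ^ 2 : ℝ) : ℂ))
      * (4 * Complex.exp (4 * ξ ^ 2) * J ^ 2 - 4 * K) := by
    simp only [F, erfc]
    rw [← hJdef, he1, he3, ← hπ2]
    rw [show (4 : ℂ) * K = 2 * Complex.exp (-(4 * ξ ^ 2)) - 8 * ξ * J from by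
      linear_combination 2 * hid]
    field_simp
    ring
  rw [hF, norm_mul]
  have hE : ‖Complex.exp (((-4 * ‖ξ‖ ^ 2 : ℝ) : ℂ))‖
      = Real.exp (-4 * (ξ.re ^ 2 + ξ.im ^ 2)) := by
    rw [Complex.norm_exp]
    congr 1
    rw [Complex.ofReal_re, habs]
  have hre4 : (4 * ξ ^ 2 : ℂ).re = 4 * (ξ.re ^ 2 - ξ.im ^ 2) := by
    simp [Complex.mul_re, pow_two]
  have hJb : ‖J‖ ≤ Real.sqrt Real.pi * Real.exp (4 * ξ.im ^ 2) := by
    have h := J_bound (2 * ξ)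
    rw [← hJdef] at h
    rw [show ((2 * ξ : ℂ)).im ^ 2 = 4 * ξ.im ^ 2 from by simp [Complex.mul_im]; ring] at h
    exact h
  have hKb : ‖K‖ ≤ Real.sqrt (4 * Real.pi) * Real.exp (4 * ξ.re ^ 2 + 4 * ξ.im ^ 2) := by
    have h := K_bound (2 * ξ)
    rw [← hKdef] at h
    rw [show ((2 * ξ : ℂ)).re ^ 2 + ((2 * ξ : ℂ)).im ^ 2 = 4 * ξ.re ^ 2 + 4 * ξ.im ^ 2 from by
      simp [Complex.mul_im, Complex.mul_re]; ring] at h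
    exact h
  have hnorm2 : ‖4 * Complex.exp (4 * ξ ^ 2) * J ^ 2 - 4 * K‖
      ≤ 4 * Real.exp (4 * (ξ.re ^ 2 - ξ.im ^ 2)) * ‖J‖ ^ 2 + 4 * ‖K‖ := by
    calc ‖4 * Complex.exp (4 * ξ ^ 2) * J ^ 2 - 4 * K‖
        ≤ ‖4 * Complex.exp (4 * ξ ^ 2) * J ^ 2‖ + ‖4 * K‖ := norm_sub_le _ _
      _ = 4 * Real.exp (4 * (ξ.re ^ 2 - ξ.im ^ 2)) * ‖J‖ ^ 2 + 4 * ‖K‖ := by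
          simp [norm_mul, norm_pow, Complex.norm_exp, hre4]
  have comb1 : Real.exp (-4 * (ξ.re ^ 2 + ξ.im ^ 2)) * Real.exp (4 * (ξ.re ^ 2 - ξ.im ^ 2))
      * (Real.exp (4 * ξ.im ^ 2) * Real.exp (4 * ξ.im ^ 2)) = 1 := by
    rw [← Real.exp_add, ← Real.exp_add, ← Real.exp_add, Real.exp_eq_one_iff]
    ring
  have comb2 : Real.exp (-4 * (ξ.re ^ 2 + ξ.im ^ 2))
      * Real.exp (4 * ξ.re ^ 2 + 4 * ξ.im ^ 2) = 1 := by
    rw [← Real.exp_add,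
      show -4 * (ξ.re ^ 2 + ξ.im ^ 2) + (4 * ξ.re ^ 2 + 4 * ξ.im ^ 2) = 0 from by ring,
      Real.exp_zero]
  have ea : Real.exp (-4 * (ξ.re ^ 2 + ξ.im ^ 2)) * (4 * Real.exp (4 * (ξ.re ^ 2 - ξ.im ^ 2))
      * (Real.sqrt Real.pi * Real.exp (4 * ξ.im ^ 2)) ^ 2) = 4 * Real.pi := by
    rw [mul_pow, Real.sq_sqrt Real.pi_pos.le]
    linear_combination (4 * Real.pi) * comb1
  have eb : Real.exp (-4 * (ξ.re ^ 2 + ξ.im ^ 2))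
      * (4 * (Real.sqrt (4 * Real.pi) * Real.exp (4 * ξ.re ^ 2 + 4 * ξ.im ^ 2)))
      = 4 * Real.sqrt (4 * Real.pi) := by
    linear_combination (4 * Real.sqrt (4 * Real.pi)) * comb2
  calc ‖Complex.exp (((-4 * ‖ξ‖ ^ 2 : ℝ) : ℂ))‖
        * ‖4 * Complex.exp (4 * ξ ^ 2) * J ^ 2 - 4 * K‖
      ≤ Real.exp (-4 * (ξ.re ^ 2 + ξ.im ^ 2))
        * (4 * Real.exp (4 * (ξ.re ^ 2 - ξ.im ^ 2)) * ‖J‖ ^ 2 + 4 * ‖K‖) := by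
        rw [hE]
        exact mul_le_mul_of_nonneg_left hnorm2 (Real.exp_nonneg _)
    _ ≤ Real.exp (-4 * (ξ.re ^ 2 + ξ.im ^ 2))
        * (4 * Real.exp (4 * (ξ.re ^ 2 - ξ.im ^ 2))
            * (Real.sqrt Real.pi * Real.exp (4 * ξ.im ^ 2)) ^ 2
          + 4 * (Real.sqrt (4 * Real.pi) * Real.exp (4 * ξ.re ^ 2 + 4 * ξ.im ^ 2))) := by
        gcongr
    _ = 4 * Real.pi + 4 * Real.sqrt (4 * Real.pi) := by
        rw [mul_add, ea, eb]
end

section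
/- Let k(ξ,η) = e^{2ξη̄-(|ξ|²+|η|²)} erfc(ξ+η̄)/2. For every multi-index (α₁,α₂,α₃,α₄) ∈ ℕ⁴ there exists a constant C > 0 such that for all ξ, η ∈ ℂ, the partial derivative ∂^{α₁}_{Re ξ} ∂^{α₂}_{Im ξ} ∂^{α₃}_{Re η} ∂^{α₄}_{Im η} k(ξ,η) is bounded in modulus by C (1 + |ξ| + |η|)^{α₁+α₂+α₃+α₄}. -/
open Complex MeasureTheory

/-- The limiting edge kernel `k(ξ,η) = e^{2ξη̄ - (|ξ|²+|η|²)} erfc(ξ+η̄)/2`. -/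
noncomputable def edgeKernel (ξ η : ℂ) : ℂ :=
  Complex.exp (2 * ξ * (starRingEnd ℂ) η
      - ((norm ξ ^ 2 + norm η ^ 2 : ℝ) : ℂ))
    * erfc (ξ + (starRingEnd ℂ) η) / 2

/-- The edge kernel as a function of the four real variables `Re ξ, Im ξ, Re η, Im η`. -/
noncomputable def edgeKernelReal (a b c d : ℝ) : ℂ :=
  edgeKernel (Complex.mk a b) (Complex.mk c d)

set_option maxHeartbeats 1000000

namespace EdgeAux

open Set


lemma norm_integrand (z : ℂ) (u : ℝ) :
    ‖Complex.exp (-(z + u) ^ 2)‖ = Real.exp (z.im ^ 2) * Real.exp (-(z.re + u) ^ 2) := by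
  rw [Complex.norm_exp, ← Real.exp_add]
  congr 1
  simp [pow_two, Complex.mul_re]
  ring

lemma integrable_trans (x : ℝ) : Integrable (fun u : ℝ => Real.exp (-(x + u) ^ 2)) := by
  have h := (integrable_exp_neg_mul_sq (b := 1) one_pos).comp_add_left x
  simpa using h

lemma integrableOn_integrand (z : ℂ) :
    IntegrableOn (fun u : ℝ => Complex.exp (-(z + u) ^ 2)) (Ioi 0) := by
  have hb : Integrable (fun u : ℝ => Real.exp (z.im ^ 2) * Real.exp (-(z.re + u) ^ 2)) :=
    (integrable_trans z.re).const_mul _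
  refine (hb.integrableOn.mono' ?_ ?_)
  · apply Continuous.aestronglyMeasurable
    fun_prop
  · filter_upwards with u
    rw [norm_integrand]

lemma integrable_aux (A M : ℝ) :
    Integrable (fun u : ℝ => (A + u) * Real.exp (-(u - M) ^ 2)) := by
  have h1 : Integrable (fun v : ℝ => (A + M) * Real.exp (-v ^ 2) + v * Real.exp (-v ^ 2)) := by
    have h2 := (integrable_exp_neg_mul_sq (b := 1) one_pos).const_mul (A + M)
    have h3 := integrable_mul_exp_neg_mul_sq (b := 1) one_pos
    simpa [Pi.add_def] using h2.add h3
  have h4 := h1.comp_sub_right M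
  refine h4.congr ?_
  filter_upwards with u
  ring_nf

/-- The derivative of `erfc`. -/
lemma erfc_hasDerivAt (z₀ : ℂ) :
    HasDerivAt erfc (-(2 / Real.sqrt Real.pi) * Complex.exp (-z₀ ^ 2)) z₀ := by
  set M : ℝ := |z₀.re| + 1 with hM
  set Y : ℝ := (|z₀.im| + 1) ^ 2 with hY
  have key := hasDerivAt_integral_of_dominated_loc_of_deriv_le (μ := volume.restrict (Ioi 0))
      (F := fun (z : ℂ) (u : ℝ) => Complex.exp (-(z + u) ^ 2))
      (F' := fun (z : ℂ) (u : ℝ) => -2 * (z + u) * Complex.exp (-(z + u) ^ 2))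
      (x₀ := z₀)
      (bound := fun u : ℝ => 2 * ((‖z₀‖ + 1 + u) * (Real.exp (Y + M ^ 2) * Real.exp (-(u - M) ^ 2))))
      (Metric.ball_mem_nhds z₀ one_pos) ?_ (integrableOn_integrand z₀) ?_ ?_ ?_ ?_
  · obtain ⟨hint, hderiv⟩ := key
    -- compute the integral of F' z₀
    have hcalc : (∫ u in Ioi (0:ℝ), -2 * (z₀ + u) * Complex.exp (-(z₀ + u) ^ 2))
        = -Complex.exp (-z₀ ^ 2) := by
      have hd : ∀ u ∈ Ici (0:ℝ), HasDerivAt (fun u : ℝ => Complex.exp (-(z₀ + u) ^ 2))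
          (-2 * (z₀ + u) * Complex.exp (-(z₀ + u) ^ 2)) u := by
        intro u _
        have hc : HasDerivAt (fun w : ℂ => Complex.exp (-(z₀ + w) ^ 2))
            (-2 * (z₀ + u) * Complex.exp (-(z₀ + u) ^ 2)) (u : ℂ) := by
          have h1 : HasDerivAt (fun w : ℂ => -(z₀ + w) ^ 2) (-(2 * (z₀ + u))) (u : ℂ) := by
            have := (((hasDerivAt_id (u : ℂ)).const_add z₀).pow 2).neg
            refine this.congr_deriv ?_
            simp only [id_eq]
            ring
          have := h1.cexp
          refine this.congr_deriv ?_
          ring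
        exact hc.comp_ofReal
      have htend : Filter.Tendsto (fun u : ℝ => Complex.exp (-(z₀ + u) ^ 2))
          Filter.atTop (nhds 0) := by
        rw [tendsto_zero_iff_norm_tendsto_zero]
        simp only [norm_integrand]
        rw [show (0:ℝ) = Real.exp (z₀.im ^ 2) * 0 by ring]
        apply Filter.Tendsto.const_mul
        apply Real.tendsto_exp_atBot.comp
        have h5 : Filter.Tendsto (fun u : ℝ => (z₀.re + u) ^ 2) Filter.atTop Filter.atTop :=
          (Filter.tendsto_pow_atTop two_ne_zero).comp
            (Filter.tendsto_atTop_add_const_left _ _ Filter.tendsto_id)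
        rw [show (fun u : ℝ => -(z₀.re + u) ^ 2) = (fun u : ℝ => -((z₀.re + u) ^ 2)) from rfl,
          Filter.tendsto_neg_atBot_iff]
        exact h5
      have := integral_Ioi_of_hasDerivAt_of_tendsto' hd hint htend
      simp only [Complex.ofReal_zero, add_zero] at this
      rw [this]
      ring_nf
    have h6 : HasDerivAt erfc
        ((2 / Real.sqrt Real.pi) * ∫ u in Ioi (0:ℝ), -2 * (z₀ + u) * Complex.exp (-(z₀ + u) ^ 2))
        z₀ := by
      have := hderiv.const_mul (2 / Real.sqrt Real.pi : ℂ)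
      exact this
    rw [hcalc] at h6
    convert h6 using 1
    ring
  · exact Filter.Eventually.of_forall fun z =>
      (Continuous.aestronglyMeasurable (by fun_prop))
  · exact Continuous.aestronglyMeasurable (by fun_prop)
  · -- bound
    filter_upwards [ae_restrict_mem measurableSet_Ioi] with u hu z hz
    have hu0 : (0:ℝ) ≤ u := le_of_lt hu
    rw [Metric.mem_ball, dist_eq_norm] at hz
    have hre : |z.re| ≤ M := by
      have h1 : |z.re - z₀.re| ≤ ‖z - z₀‖ := by
        have := Complex.abs_re_le_norm (z - z₀)
        simpa [Complex.sub_re] using this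
      have := abs_sub_abs_le_abs_sub z.re z₀.re
      rw [hM]
      calc |z.re| ≤ |z₀.re| + |z.re - z₀.re| := by
            have := abs_add_le (z.re - z₀.re) z₀.re
            simpa [sub_add_cancel, add_comm] using this
        _ ≤ |z₀.re| + 1 := by linarith
    have him : z.im ^ 2 ≤ Y := by
      have h1 : |z.im - z₀.im| ≤ ‖z - z₀‖ := by
        have := Complex.abs_im_le_norm (z - z₀)
        simpa [Complex.sub_im] using this
      have h2 : |z.im| ≤ |z₀.im| + 1 := by
        calc |z.im| ≤ |z₀.im| + |z.im - z₀.im| := by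
              have := abs_add_le (z.im - z₀.im) z₀.im
              simpa [sub_add_cancel, add_comm] using this
          _ ≤ |z₀.im| + 1 := by linarith
      rw [hY]
      calc z.im ^ 2 = |z.im| ^ 2 := (_root_.sq_abs _).symm
        _ ≤ (|z₀.im| + 1) ^ 2 := by
            apply pow_le_pow_left₀ (abs_nonneg _) h2
    have hnz : ‖z + (u:ℂ)‖ ≤ ‖z₀‖ + 1 + u := by
      calc ‖z + (u:ℂ)‖ = ‖(z - z₀) + (z₀ + u)‖ := by ring_nf
        _ ≤ ‖z - z₀‖ + ‖z₀ + (u:ℂ)‖ := norm_add_le _ _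
        _ ≤ 1 + (‖z₀‖ + u) := by
            have h3 : ‖z₀ + (u:ℂ)‖ ≤ ‖z₀‖ + u := by
              calc ‖z₀ + (u:ℂ)‖ ≤ ‖z₀‖ + ‖(u:ℂ)‖ := norm_add_le _ _
                _ = ‖z₀‖ + |u| := by rw [Complex.norm_real, Real.norm_eq_abs]
                _ = ‖z₀‖ + u := by rw [_root_.abs_of_nonneg hu0]
            linarith [le_of_lt hz]
        _ = ‖z₀‖ + 1 + u := by ring
    have hexp : Real.exp (z.im ^ 2) * Real.exp (-(z.re + u) ^ 2)
        ≤ Real.exp (Y + M ^ 2) * Real.exp (-(u - M) ^ 2) := by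
      rw [← Real.exp_add, ← Real.exp_add]
      apply Real.exp_le_exp.2
      have habs : -M ≤ z.re := by
        have := abs_le.1 hre; exact this.1
      have key : (u - M) ^ 2 - M ^ 2 ≤ (z.re + u) ^ 2 := by
        nlinarith [mul_nonneg hu0 (by linarith : (0:ℝ) ≤ z.re + M), sq_nonneg z.re]
      linarith
    calc ‖-2 * (z + u) * Complex.exp (-(z + u) ^ 2)‖
        = 2 * (‖z + (u:ℂ)‖ * (Real.exp (z.im ^ 2) * Real.exp (-(z.re + u) ^ 2))) := by
          rw [norm_mul, norm_integrand, norm_mul]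
          simp [norm_neg]
          ring
      _ ≤ 2 * ((‖z₀‖ + 1 + u) * (Real.exp (Y + M ^ 2) * Real.exp (-(u - M) ^ 2))) := by
          apply mul_le_mul_of_nonneg_left _ (by norm_num : (0:ℝ) ≤ 2)
          apply mul_le_mul hnz hexp (by positivity) (by positivity)
  · -- integrability of the bound
    have h7 := (integrable_aux (‖z₀‖ + 1) M).const_mul (2 * Real.exp (Y + M ^ 2))
    refine (h7.congr ?_).integrableOn
    filter_upwards with u
    ring
  · -- differentiability
    refine Filter.Eventually.of_forall fun u => fun z _ => ?_
    have h1 : HasDerivAt (fun w : ℂ => -(w + (u:ℂ)) ^ 2) (-(2 * (z + u))) z := by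
      have := (((hasDerivAt_id z).add_const (u:ℂ)).pow 2).neg
      refine this.congr_deriv ?_
      simp only [id_eq]
      ring
    have h2 := h1.cexp
    refine h2.congr_deriv ?_
    ring


lemma norm_integral_erfc (z : ℂ) :
    ‖∫ u in Ioi (0:ℝ), Complex.exp (-(z + u) ^ 2)‖
      ≤ Real.exp (z.im ^ 2) * ∫ u in Ioi (0:ℝ), Real.exp (-(z.re + u) ^ 2) := by
  calc ‖∫ u in Ioi (0:ℝ), Complex.exp (-(z + u) ^ 2)‖
      ≤ ∫ u in Ioi (0:ℝ), ‖Complex.exp (-(z + u) ^ 2)‖ := norm_integral_le_integral_norm _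
    _ = ∫ u in Ioi (0:ℝ), Real.exp (z.im ^ 2) * Real.exp (-(z.re + u) ^ 2) := by
        congr 1; funext u; exact norm_integrand z u
    _ = Real.exp (z.im ^ 2) * ∫ u in Ioi (0:ℝ), Real.exp (-(z.re + u) ^ 2) := by
        rw [MeasureTheory.integral_const_mul]

lemma cs_norm : ‖(2 / Real.sqrt Real.pi : ℂ)‖ = 2 / Real.sqrt Real.pi := by
  rw [norm_div]
  simp [Complex.norm_real, Real.sqrt_nonneg, abs_of_nonneg]

lemma norm_erfc_le (z : ℂ) : ‖erfc z‖ ≤ 2 * Real.exp (z.im ^ 2) := by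
  have hπ : 0 < Real.sqrt Real.pi := Real.sqrt_pos.2 Real.pi_pos
  have h1 : ∫ u in Ioi (0:ℝ), Real.exp (-(z.re + u) ^ 2) ≤ Real.sqrt Real.pi := by
    have h2 : ∫ u in Ioi (0:ℝ), Real.exp (-(z.re + u) ^ 2)
        ≤ ∫ u : ℝ, Real.exp (-(z.re + u) ^ 2) := by
      apply setIntegral_le_integral (integrable_trans z.re)
      filter_upwards with u using (Real.exp_pos _).le
    have h3 : ∫ u : ℝ, Real.exp (-(z.re + u) ^ 2) = Real.sqrt Real.pi := by
      have h4 := MeasureTheory.integral_add_left_eq_self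
        (μ := (volume : Measure ℝ)) (fun u : ℝ => Real.exp (-(u) ^ 2)) z.re
      rw [h4]
      have := integral_gaussian 1
      simpa using this
    linarith
  calc ‖erfc z‖ = (2 / Real.sqrt Real.pi) * ‖∫ u in Ioi (0:ℝ), Complex.exp (-(z + u) ^ 2)‖ := by
        rw [erfc, norm_mul, cs_norm]
    _ ≤ (2 / Real.sqrt Real.pi) * (Real.exp (z.im ^ 2) * Real.sqrt Real.pi) := by
        apply mul_le_mul_of_nonneg_left _ (by positivity)
        exact le_trans (norm_integral_erfc z)
          (mul_le_mul_of_nonneg_left h1 (Real.exp_pos _).le)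
    _ = 2 * Real.exp (z.im ^ 2) := by field_simp
  
lemma norm_erfc_le' (z : ℂ) (hz : 0 ≤ z.re) :
    ‖erfc z‖ ≤ Real.exp (z.im ^ 2 - z.re ^ 2) := by
  have hπ : 0 < Real.sqrt Real.pi := Real.sqrt_pos.2 Real.pi_pos
  have h1 : ∫ u in Ioi (0:ℝ), Real.exp (-(z.re + u) ^ 2)
      ≤ Real.exp (-z.re ^ 2) * (Real.sqrt Real.pi / 2) := by
    have h2 : ∫ u in Ioi (0:ℝ), Real.exp (-(z.re + u) ^ 2)
        ≤ ∫ u in Ioi (0:ℝ), Real.exp (-z.re ^ 2) * Real.exp (-u ^ 2) := by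
      apply setIntegral_mono_on (integrable_trans z.re).integrableOn
      · exact (((integrable_exp_neg_mul_sq (b := 1) one_pos).congr (by
          filter_upwards with u; simp)).const_mul _).integrableOn
      · exact measurableSet_Ioi
      · intro u hu
        rw [← Real.exp_add]
        apply Real.exp_le_exp.2
        have hu0 : (0:ℝ) ≤ u := le_of_lt hu
        nlinarith [mul_nonneg hz hu0]
    have h3 : ∫ u in Ioi (0:ℝ), Real.exp (-z.re ^ 2) * Real.exp (-u ^ 2)
        = Real.exp (-z.re ^ 2) * (Real.sqrt Real.pi / 2) := by
      rw [MeasureTheory.integral_const_mul]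
      congr 1
      have := integral_gaussian_Ioi 1
      simpa using this
    linarith
  calc ‖erfc z‖ = (2 / Real.sqrt Real.pi) * ‖∫ u in Ioi (0:ℝ), Complex.exp (-(z + u) ^ 2)‖ := by
        rw [erfc, norm_mul, cs_norm]
    _ ≤ (2 / Real.sqrt Real.pi) * (Real.exp (z.im ^ 2) *
          (Real.exp (-z.re ^ 2) * (Real.sqrt Real.pi / 2))) := by
        apply mul_le_mul_of_nonneg_left _ (by positivity)
        exact le_trans (norm_integral_erfc z)
          (mul_le_mul_of_nonneg_left h1 (Real.exp_pos _).le)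
    _ = Real.exp (z.im ^ 2 - z.re ^ 2) := by
        rw [Real.exp_sub, eq_div_iff (Real.exp_ne_zero _)]
        rw [show 2 / Real.sqrt Real.pi * (Real.exp (z.im ^ 2) *
              (Real.exp (-z.re ^ 2) * (Real.sqrt Real.pi / 2))) * Real.exp (z.re ^ 2)
            = (Real.sqrt Real.pi / Real.sqrt Real.pi) *
              (Real.exp (-z.re ^ 2) * Real.exp (z.re ^ 2)) * Real.exp (z.im ^ 2) by ring]
        rw [div_self (ne_of_gt hπ), ← Real.exp_add]
        simp


/-! ### The term algebra -/

noncomputable def Ee (a b c d : ℝ) : ℂ :=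
  Complex.exp (2 * Complex.mk a b * (starRingEnd ℂ) (Complex.mk c d)
    - ((‖Complex.mk a b‖ ^ 2 + ‖Complex.mk c d‖ ^ 2 : ℝ) : ℂ))

noncomputable def Sv (a b c d : ℝ) : ℂ := Complex.mk a b + (starRingEnd ℂ) (Complex.mk c d)

noncomputable def Fb (t : Bool) (z : ℂ) : ℂ := if t then erfc z else Complex.exp (-z ^ 2)

noncomputable def Fd (t : Bool) (z : ℂ) : ℂ :=
  if t then -(2 / Real.sqrt Real.pi) * Complex.exp (-z ^ 2) else -2 * z * Complex.exp (-z ^ 2)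

noncomputable def tFun (t : Bool) (co : ℂ) (i j k l : ℕ) (a b c d : ℝ) : ℂ :=
  co * (a : ℂ) ^ i * (b : ℂ) ^ j * (c : ℂ) ^ k * (d : ℂ) ^ l * Ee a b c d * Fb t (Sv a b c d)

lemma conj_mk (c d : ℝ) : (starRingEnd ℂ) (Complex.mk c d) = (c : ℂ) - d * I := by
  rw [Complex.mk_eq_add_mul_I]
  simp [map_add, map_mul, Complex.conj_ofReal, Complex.conj_I]
  ring

lemma absq_mk (a b : ℝ) : (‖Complex.mk a b‖) ^ 2 = a ^ 2 + b ^ 2 := by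
  rw [Complex.sq_norm]
  show Complex.normSq ⟨a, b⟩ = a ^ 2 + b ^ 2
  rw [Complex.normSq_mk]; ring

lemma Ee_eq (a b c d : ℝ) : Ee a b c d =
    Complex.exp (2 * ((a : ℂ) + b * I) * ((c : ℂ) - d * I)
      - ((a : ℂ) ^ 2 + (b : ℂ) ^ 2 + (c : ℂ) ^ 2 + (d : ℂ) ^ 2)) := by
  unfold Ee
  rw [absq_mk, absq_mk, Complex.mk_eq_add_mul_I, conj_mk]
  congr 1
  push_cast
  ring

lemma Sv_eq (a b c d : ℝ) : Sv a b c d = (a : ℂ) + c + ((b : ℂ) - d) * I := by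
  unfold Sv
  rw [Complex.mk_eq_add_mul_I, conj_mk]
  ring

lemma Sv_re (a b c d : ℝ) : (Sv a b c d).re = a + c := by
  simp [Sv]

lemma Sv_im (a b c d : ℝ) : (Sv a b c d).im = b - d := by
  simp [Sv]
  ring

lemma norm_Ee (a b c d : ℝ) : ‖Ee a b c d‖ = Real.exp (-((a - c) ^ 2 + (b - d) ^ 2)) := by
  rw [Ee_eq, Complex.norm_exp]
  congr 1
  simp [pow_two, Complex.mul_re, Complex.add_re, Complex.add_im, Complex.sub_re, Complex.sub_im]
  ring

lemma norm_EeFb_le (t : Bool) (a b c d : ℝ) :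
    ‖Ee a b c d * Fb t (Sv a b c d)‖ ≤ 2 := by
  cases t
  · -- `false`: Gaussian factor
    simp only [Fb, Bool.false_eq_true, if_false]
    rw [Ee_eq, ← Complex.exp_add, Complex.norm_exp]
    have h1 : (2 * ((a : ℂ) + b * I) * ((c : ℂ) - d * I)
        - ((a : ℂ) ^ 2 + (b : ℂ) ^ 2 + (c : ℂ) ^ 2 + (d : ℂ) ^ 2)
        + -(Sv a b c d) ^ 2).re = -(2 * a ^ 2 + 2 * c ^ 2) := by
      rw [Sv_eq]
      simp [pow_two, Complex.mul_re, Complex.add_re, Complex.add_im, Complex.sub_re,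
        Complex.sub_im]
      ring
    rw [h1]
    calc Real.exp (-(2 * a ^ 2 + 2 * c ^ 2)) ≤ 1 := by
          rw [Real.exp_le_one_iff]; nlinarith [sq_nonneg a, sq_nonneg c]
      _ ≤ 2 := by norm_num
  · -- `true`: erfc factor
    simp only [Fb, if_true]
    rw [norm_mul, norm_Ee]
    rcases le_or_gt 0 (a + c) with h | h
    · have h2 : ‖erfc (Sv a b c d)‖ ≤ Real.exp ((b - d) ^ 2 - (a + c) ^ 2) := by
        have := norm_erfc_le' (Sv a b c d) (by rw [Sv_re]; exact h)
        simpa [Sv_re, Sv_im] using this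
      calc Real.exp (-((a - c) ^ 2 + (b - d) ^ 2)) * ‖erfc (Sv a b c d)‖
          ≤ Real.exp (-((a - c) ^ 2 + (b - d) ^ 2)) * Real.exp ((b - d) ^ 2 - (a + c) ^ 2) :=
            mul_le_mul_of_nonneg_left h2 (Real.exp_pos _).le
        _ = Real.exp (-((a - c) ^ 2 + (b - d) ^ 2) + ((b - d) ^ 2 - (a + c) ^ 2)) :=
            (Real.exp_add _ _).symm
        _ ≤ 1 := by rw [Real.exp_le_one_iff]; nlinarith [sq_nonneg (a - c), sq_nonneg (a + c)]
        _ ≤ 2 := by norm_num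
    · have h2 : ‖erfc (Sv a b c d)‖ ≤ 2 * Real.exp ((b - d) ^ 2) := by
        have := norm_erfc_le (Sv a b c d)
        simpa [Sv_im] using this
      calc Real.exp (-((a - c) ^ 2 + (b - d) ^ 2)) * ‖erfc (Sv a b c d)‖
          ≤ Real.exp (-((a - c) ^ 2 + (b - d) ^ 2)) * (2 * Real.exp ((b - d) ^ 2)) :=
            mul_le_mul_of_nonneg_left h2 (Real.exp_pos _).le
        _ = 2 * Real.exp (-((a - c) ^ 2 + (b - d) ^ 2) + (b - d) ^ 2) := by
            rw [show Real.exp (-((a - c) ^ 2 + (b - d) ^ 2)) * (2 * Real.exp ((b - d) ^ 2))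
                = 2 * (Real.exp (-((a - c) ^ 2 + (b - d) ^ 2)) * Real.exp ((b - d) ^ 2)) by ring,
              ← Real.exp_add]
        _ ≤ 2 * 1 := by
            apply mul_le_mul_of_nonneg_left _ (by norm_num : (0:ℝ) ≤ 2)
            rw [Real.exp_le_one_iff]; nlinarith [sq_nonneg (a - c)]
        _ = 2 := by norm_num

lemma tFun_norm_le (t : Bool) (co : ℂ) (i j k l n : ℕ) (h : i + j + k + l ≤ n)
    (a b c d : ℝ) :
    ‖tFun t co i j k l a b c d‖
      ≤ 2 * ‖co‖ * (1 + ‖Complex.mk a b‖ + ‖Complex.mk c d‖) ^ n := by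
  set R : ℝ := 1 + ‖Complex.mk a b‖ + ‖Complex.mk c d‖ with hR
  have hR1 : 1 ≤ R := by
    rw [hR]
    have := norm_nonneg (Complex.mk a b)
    have := norm_nonneg (Complex.mk c d)
    linarith
  have hR0 : 0 ≤ R := by linarith
  have hfact : ∀ x y : ℝ, |x| ≤ ‖Complex.mk x y‖ := by
    intro x y
    have := Complex.abs_re_le_norm (Complex.mk x y)
    simpa using this
  have hfact' : ∀ x y : ℝ, |x| ≤ ‖Complex.mk y x‖ := by
    intro x y
    have := Complex.abs_im_le_norm (Complex.mk y x)
    simpa using this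
  have ha : ‖(a : ℂ)‖ ≤ R := by
    rw [Complex.norm_real, Real.norm_eq_abs, hR]
    have := hfact a b; linarith [norm_nonneg (Complex.mk c d)]
  have hb : ‖(b : ℂ)‖ ≤ R := by
    rw [Complex.norm_real, Real.norm_eq_abs, hR]
    have := hfact' b a; linarith [norm_nonneg (Complex.mk c d)]
  have hc : ‖(c : ℂ)‖ ≤ R := by
    rw [Complex.norm_real, Real.norm_eq_abs, hR]
    have := hfact c d; linarith [norm_nonneg (Complex.mk a b)]
  have hd : ‖(d : ℂ)‖ ≤ R := by
    rw [Complex.norm_real, Real.norm_eq_abs, hR]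
    have := hfact' d c; linarith [norm_nonneg (Complex.mk a b)]
  have h1 : tFun t co i j k l a b c d
      = (co * (a : ℂ) ^ i * (b : ℂ) ^ j * (c : ℂ) ^ k * (d : ℂ) ^ l)
        * (Ee a b c d * Fb t (Sv a b c d)) := by
    unfold tFun; ring
  rw [h1, norm_mul]
  have h2 : ‖co * (a : ℂ) ^ i * (b : ℂ) ^ j * (c : ℂ) ^ k * (d : ℂ) ^ l‖ ≤ ‖co‖ * R ^ n := by
    rw [norm_mul, norm_mul, norm_mul, norm_mul, norm_pow, norm_pow, norm_pow, norm_pow]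
    calc ‖co‖ * ‖(a:ℂ)‖ ^ i * ‖(b:ℂ)‖ ^ j * ‖(c:ℂ)‖ ^ k * ‖(d:ℂ)‖ ^ l
        ≤ ‖co‖ * R ^ i * R ^ j * R ^ k * R ^ l := by
          gcongr <;> first | exact norm_nonneg _ | assumption
      _ = ‖co‖ * R ^ (i + j + k + l) := by rw [pow_add, pow_add, pow_add]; ring
      _ ≤ ‖co‖ * R ^ n := by
          apply mul_le_mul_of_nonneg_left _ (norm_nonneg _)
          exact pow_le_pow_right₀ hR1 h
  calc ‖co * (a:ℂ)^i * (b:ℂ)^j * (c:ℂ)^k * (d:ℂ)^l‖ * ‖Ee a b c d * Fb t (Sv a b c d)‖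
      ≤ (‖co‖ * R ^ n) * 2 :=
        mul_le_mul h2 (norm_EeFb_le t a b c d) (norm_nonneg _) (by positivity)
    _ = 2 * ‖co‖ * R ^ n := by ring


/-! ### Goodness -/

inductive Good : ℕ → (ℝ → ℝ → ℝ → ℝ → ℂ) → Prop
  | term (t : Bool) (co : ℂ) (i j k l n : ℕ) (h : i + j + k + l ≤ n) :
      Good n (tFun t co i j k l)
  | add {n : ℕ} {f g : ℝ → ℝ → ℝ → ℝ → ℂ} (hf : Good n f) (hg : Good n g) :
      Good n (fun a b c d => f a b c d + g a b c d)

lemma Good.bound {n : ℕ} {f : ℝ → ℝ → ℝ → ℝ → ℂ} (hf : Good n f) :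
    ∃ C : ℝ, 0 < C ∧ ∀ a b c d : ℝ, ‖f a b c d‖
      ≤ C * (1 + ‖Complex.mk a b‖ + ‖Complex.mk c d‖) ^ n := by
  induction hf with
  | term t co i j k l n h =>
      refine ⟨2 * ‖co‖ + 1, by positivity, fun a b c d => ?_⟩
      refine le_trans (tFun_norm_le t co i j k l n h a b c d) ?_
      have h1 : (0:ℝ) ≤ (1 + ‖Complex.mk a b‖ + ‖Complex.mk c d‖) ^ n := by
        positivity
      nlinarith [norm_nonneg co]
  | add hf hg ihf ihg =>
      obtain ⟨C₁, hC₁, h₁⟩ := ihf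
      obtain ⟨C₂, hC₂, h₂⟩ := ihg
      refine ⟨C₁ + C₂, by linarith, fun a b c d => ?_⟩
      calc ‖_ + _‖ ≤ ‖_‖ + ‖_‖ := norm_add_le _ _
        _ ≤ C₁ * _ + C₂ * _ := add_le_add (h₁ a b c d) (h₂ a b c d)
        _ = (C₁ + C₂) * _ := by ring

/-! ### Derivatives of the building blocks -/

lemma Fb_hasDerivAt (t : Bool) (z : ℂ) : HasDerivAt (fun w => Fb t w) (Fd t z) z := by
  cases t
  · simp only [Fb, Fd, Bool.false_eq_true, if_false]
    have h1 := ((hasDerivAt_pow 2 z).neg).cexp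
    refine h1.congr_deriv ?_
    simp only [pow_one, Nat.cast_ofNat, Pi.neg_apply]
    ring_nf
  · simp only [Fb, Fd, if_true]
    exact erfc_hasDerivAt z

lemma hasDerivAt_Ee_a (a b c d : ℝ) :
    HasDerivAt (fun x : ℝ => Ee x b c d)
      ((2 * (c:ℂ) - 2 * d * I - 2 * a) * Ee a b c d) a := by
  have h1 : HasDerivAt (fun z : ℂ => 2 * (z + (b:ℂ) * I) * ((c:ℂ) - d * I)
      - (z ^ 2 + ((b:ℂ) ^ 2 + (c:ℂ) ^ 2 + (d:ℂ) ^ 2)))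
      (2 * ((c:ℂ) - d * I) - 2 * a) (a : ℂ) := by
    have h2 := ((((hasDerivAt_id ((a:ℂ))).add_const ((b:ℂ) * I)).const_mul
        (2:ℂ)).mul_const ((c:ℂ) - d * I)).sub
      ((hasDerivAt_pow 2 ((a:ℂ))).add_const ((b:ℂ) ^ 2 + (c:ℂ) ^ 2 + (d:ℂ) ^ 2))
    refine h2.congr_deriv ?_
    simp only [pow_one, Nat.cast_ofNat]
    ring
  have h6 := (h1.cexp).comp_ofReal
  have h5 : (fun x : ℝ => Ee x b c d) = fun x : ℝ => Complex.exp
      (2 * ((x:ℂ) + (b:ℂ) * I) * ((c:ℂ) - d * I)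
        - ((x:ℂ) ^ 2 + ((b:ℂ) ^ 2 + (c:ℂ) ^ 2 + (d:ℂ) ^ 2))) := by
    funext x
    rw [Ee_eq]
    congr 1
    ring
  rw [h5]
  convert h6 using 1
  rw [Ee_eq, show 2 * ((a:ℂ) + b * I) * ((c:ℂ) - d * I)
        - ((a:ℂ) ^ 2 + (b:ℂ) ^ 2 + (c:ℂ) ^ 2 + (d:ℂ) ^ 2)
      = 2 * ((a:ℂ) + (b:ℂ) * I) * ((c:ℂ) - d * I)
        - ((a:ℂ) ^ 2 + ((b:ℂ) ^ 2 + (c:ℂ) ^ 2 + (d:ℂ) ^ 2)) by ring]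
  ring

lemma hasDerivAt_Ee_b (a b c d : ℝ) :
    HasDerivAt (fun x : ℝ => Ee a x c d)
      ((2 * (d:ℂ) + 2 * c * I - 2 * b) * Ee a b c d) b := by
  have h1 : HasDerivAt (fun z : ℂ => 2 * ((a:ℂ) + z * I) * ((c:ℂ) - d * I)
      - (z ^ 2 + ((a:ℂ) ^ 2 + (c:ℂ) ^ 2 + (d:ℂ) ^ 2)))
      (2 * I * ((c:ℂ) - d * I) - 2 * b) (b : ℂ) := by
    have h2 := (((((hasDerivAt_id ((b:ℂ))).mul_const I).const_add ((a:ℂ))).const_mul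
        (2:ℂ)).mul_const ((c:ℂ) - d * I)).sub
      ((hasDerivAt_pow 2 ((b:ℂ))).add_const ((a:ℂ) ^ 2 + (c:ℂ) ^ 2 + (d:ℂ) ^ 2))
    refine h2.congr_deriv ?_
    simp only [pow_one, Nat.cast_ofNat]
    ring
  have h6 := (h1.cexp).comp_ofReal
  have h5 : (fun x : ℝ => Ee a x c d) = fun x : ℝ => Complex.exp
      (2 * ((a:ℂ) + (x:ℂ) * I) * ((c:ℂ) - d * I)
        - ((x:ℂ) ^ 2 + ((a:ℂ) ^ 2 + (c:ℂ) ^ 2 + (d:ℂ) ^ 2))) := by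
    funext x
    rw [Ee_eq]
    congr 1
    ring
  rw [h5]
  convert h6 using 1
  rw [Ee_eq, show 2 * ((a:ℂ) + b * I) * ((c:ℂ) - d * I)
        - ((a:ℂ) ^ 2 + (b:ℂ) ^ 2 + (c:ℂ) ^ 2 + (d:ℂ) ^ 2)
      = 2 * ((a:ℂ) + (b:ℂ) * I) * ((c:ℂ) - d * I)
        - ((b:ℂ) ^ 2 + ((a:ℂ) ^ 2 + (c:ℂ) ^ 2 + (d:ℂ) ^ 2)) by ring]
  linear_combination (2 * (d:ℂ) * Complex.exp (2 * ((a:ℂ) + (b:ℂ) * I) * ((c:ℂ) - d * I)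
    - ((b:ℂ) ^ 2 + ((a:ℂ) ^ 2 + (c:ℂ) ^ 2 + (d:ℂ) ^ 2)))) * Complex.I_sq

lemma hasDerivAt_Ee_c (a b c d : ℝ) :
    HasDerivAt (fun x : ℝ => Ee a b x d)
      ((2 * (a:ℂ) - 2 * c + 2 * b * I) * Ee a b c d) c := by
  have h1 : HasDerivAt (fun z : ℂ => 2 * ((a:ℂ) + (b:ℂ) * I) * (z - (d:ℂ) * I)
      - (z ^ 2 + ((a:ℂ) ^ 2 + (b:ℂ) ^ 2 + (d:ℂ) ^ 2)))
      (2 * ((a:ℂ) + (b:ℂ) * I) - 2 * c) (c : ℂ) := by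
    have h2 := (((hasDerivAt_id ((c:ℂ))).sub_const ((d:ℂ) * I)).const_mul
        (2 * ((a:ℂ) + (b:ℂ) * I))).sub
      ((hasDerivAt_pow 2 ((c:ℂ))).add_const ((a:ℂ) ^ 2 + (b:ℂ) ^ 2 + (d:ℂ) ^ 2))
    refine h2.congr_deriv ?_
    simp only [pow_one, Nat.cast_ofNat]
    ring
  have h6 := (h1.cexp).comp_ofReal
  have h5 : (fun x : ℝ => Ee a b x d) = fun x : ℝ => Complex.exp
      (2 * ((a:ℂ) + (b:ℂ) * I) * ((x:ℂ) - (d:ℂ) * I)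
        - ((x:ℂ) ^ 2 + ((a:ℂ) ^ 2 + (b:ℂ) ^ 2 + (d:ℂ) ^ 2))) := by
    funext x
    rw [Ee_eq]
    congr 1
    ring
  rw [h5]
  convert h6 using 1
  rw [Ee_eq, show 2 * ((a:ℂ) + b * I) * ((c:ℂ) - d * I)
        - ((a:ℂ) ^ 2 + (b:ℂ) ^ 2 + (c:ℂ) ^ 2 + (d:ℂ) ^ 2)
      = 2 * ((a:ℂ) + (b:ℂ) * I) * ((c:ℂ) - (d:ℂ) * I)
        - ((c:ℂ) ^ 2 + ((a:ℂ) ^ 2 + (b:ℂ) ^ 2 + (d:ℂ) ^ 2)) by ring]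
  ring

lemma hasDerivAt_Ee_d (a b c d : ℝ) :
    HasDerivAt (fun x : ℝ => Ee a b c x)
      ((2 * (b:ℂ) - 2 * d - 2 * a * I) * Ee a b c d) d := by
  have h1 : HasDerivAt (fun z : ℂ => 2 * ((a:ℂ) + (b:ℂ) * I) * ((c:ℂ) + -(z * I))
      - (z ^ 2 + ((a:ℂ) ^ 2 + (b:ℂ) ^ 2 + (c:ℂ) ^ 2)))
      (2 * ((a:ℂ) + (b:ℂ) * I) * (-I) - 2 * d) (d : ℂ) := by
    have h2 := (((((hasDerivAt_id ((d:ℂ))).mul_const I).neg).const_add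
        ((c:ℂ))).const_mul (2 * ((a:ℂ) + (b:ℂ) * I))).sub
      ((hasDerivAt_pow 2 ((d:ℂ))).add_const ((a:ℂ) ^ 2 + (b:ℂ) ^ 2 + (c:ℂ) ^ 2))
    refine h2.congr_deriv ?_
    simp only [pow_one, Nat.cast_ofNat]
    ring
  have h6 := (h1.cexp).comp_ofReal
  have h5 : (fun x : ℝ => Ee a b c x) = fun x : ℝ => Complex.exp
      (2 * ((a:ℂ) + (b:ℂ) * I) * ((c:ℂ) + -((x:ℂ) * I))
        - ((x:ℂ) ^ 2 + ((a:ℂ) ^ 2 + (b:ℂ) ^ 2 + (c:ℂ) ^ 2))) := by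
    funext x
    rw [Ee_eq]
    congr 1
    ring
  rw [h5]
  convert h6 using 1
  rw [Ee_eq, show 2 * ((a:ℂ) + b * I) * ((c:ℂ) - d * I)
        - ((a:ℂ) ^ 2 + (b:ℂ) ^ 2 + (c:ℂ) ^ 2 + (d:ℂ) ^ 2)
      = 2 * ((a:ℂ) + (b:ℂ) * I) * ((c:ℂ) + -((d:ℂ) * I))
        - ((d:ℂ) ^ 2 + ((a:ℂ) ^ 2 + (b:ℂ) ^ 2 + (c:ℂ) ^ 2)) by ring]
  linear_combination (2 * (b:ℂ) * Complex.exp (2 * ((a:ℂ) + (b:ℂ) * I) * ((c:ℂ) + -((d:ℂ) * I))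
    - ((d:ℂ) ^ 2 + ((a:ℂ) ^ 2 + (b:ℂ) ^ 2 + (c:ℂ) ^ 2)))) * Complex.I_sq


lemma hasDerivAt_Fb_a (t : Bool) (a b c d : ℝ) :
    HasDerivAt (fun x : ℝ => Fb t (Sv x b c d)) (Fd t (Sv a b c d)) a := by
  have hSv : ∀ x : ℝ, Sv x b c d = (x : ℂ) + Complex.mk c (b - d) := by
    intro x
    apply Complex.ext <;> simp [Sv] <;> ring
  have h1 : HasDerivAt (fun z : ℂ => Fb t (z + Complex.mk c (b - d)))
      (Fd t ((a : ℂ) + Complex.mk c (b - d)) * 1) (a : ℂ) :=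
    (Fb_hasDerivAt t _).comp _ ((hasDerivAt_id _).add_const _)
  have h2 := h1.comp_ofReal
  simp only [← hSv, mul_one] at h2
  exact h2

lemma hasDerivAt_Fb_b (t : Bool) (a b c d : ℝ) :
    HasDerivAt (fun x : ℝ => Fb t (Sv a x c d)) (Fd t (Sv a b c d) * I) b := by
  have hSv : ∀ x : ℝ, Sv a x c d = (x : ℂ) * I + Complex.mk (a + c) (-d) := by
    intro x
    apply Complex.ext <;> simp [Sv] <;> ring
  have h1 : HasDerivAt (fun z : ℂ => Fb t (z * I + Complex.mk (a + c) (-d)))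
      (Fd t ((b : ℂ) * I + Complex.mk (a + c) (-d)) * (1 * I)) (b : ℂ) :=
    (Fb_hasDerivAt t _).comp _ (((hasDerivAt_id _).mul_const I).add_const _)
  have h2 := h1.comp_ofReal
  simp only [← hSv, one_mul] at h2
  exact h2

lemma hasDerivAt_Fb_c (t : Bool) (a b c d : ℝ) :
    HasDerivAt (fun x : ℝ => Fb t (Sv a b x d)) (Fd t (Sv a b c d)) c := by
  have hSv : ∀ x : ℝ, Sv a b x d = (x : ℂ) + Complex.mk a (b - d) := by
    intro x
    apply Complex.ext <;> simp [Sv] <;> ring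
  have h1 : HasDerivAt (fun z : ℂ => Fb t (z + Complex.mk a (b - d)))
      (Fd t ((c : ℂ) + Complex.mk a (b - d)) * 1) (c : ℂ) :=
    (Fb_hasDerivAt t _).comp _ ((hasDerivAt_id _).add_const _)
  have h2 := h1.comp_ofReal
  simp only [← hSv, mul_one] at h2
  exact h2

lemma hasDerivAt_Fb_d (t : Bool) (a b c d : ℝ) :
    HasDerivAt (fun x : ℝ => Fb t (Sv a b c x)) (Fd t (Sv a b c d) * (-I)) d := by
  have hSv : ∀ x : ℝ, Sv a b c x = (x : ℂ) * (-I) + Complex.mk (a + c) b := by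
    intro x
    apply Complex.ext <;> simp [Sv] <;> ring
  have h1 : HasDerivAt (fun z : ℂ => Fb t (z * (-I) + Complex.mk (a + c) b))
      (Fd t ((d : ℂ) * (-I) + Complex.mk (a + c) b) * (1 * (-I))) (d : ℂ) :=
    (Fb_hasDerivAt t _).comp _ (((hasDerivAt_id _).mul_const (-I)).add_const _)
  have h2 := h1.comp_ofReal
  simp only [← hSv, one_mul] at h2
  exact h2

/-! ### The `Fd`-part of a derivative of a term -/

noncomputable def FdPart (t : Bool) (co : ℂ) (i j k l : ℕ) : ℝ → ℝ → ℝ → ℝ → ℂ :=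
  if t then tFun false (-(2 / Real.sqrt Real.pi) * co) i j k l
  else fun a b c d =>
    tFun false (-2 * co) (i + 1) j k l a b c d
    + tFun false (-2 * co) i j (k + 1) l a b c d
    + tFun false (-2 * I * co) i (j + 1) k l a b c d
    + tFun false (2 * I * co) i j k (l + 1) a b c d

lemma FdPart_good (t : Bool) (co : ℂ) {i j k l n : ℕ} (h : i + j + k + l ≤ n) :
    Good (n + 1) (FdPart t co i j k l) := by
  cases t
  · simp only [FdPart, Bool.false_eq_true, if_false]
    exact Good.add (Good.add (Good.add
      (Good.term _ _ _ _ _ _ _ (by omega)) (Good.term _ _ _ _ _ _ _ (by omega)))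
      (Good.term _ _ _ _ _ _ _ (by omega))) (Good.term _ _ _ _ _ _ _ (by omega))
  · simp only [FdPart, if_true]
    exact Good.term _ _ _ _ _ _ _ (by omega)

lemma FdPart_eq (t : Bool) (co : ℂ) (i j k l : ℕ) (a b c d : ℝ) :
    FdPart t co i j k l a b c d
      = co * (a : ℂ) ^ i * (b : ℂ) ^ j * (c : ℂ) ^ k * (d : ℂ) ^ l * Ee a b c d
        * Fd t (Sv a b c d) := by
  cases t
  · simp only [FdPart, Bool.false_eq_true, if_false, tFun, Fb, Fd]
    rw [Sv_eq]
    push_cast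
    ring
  · simp only [FdPart, if_true, tFun, Fb, Fd, Bool.false_eq_true, if_false]
    ring


lemma Good.derivA {n : ℕ} {f : ℝ → ℝ → ℝ → ℝ → ℂ} (hf : Good n f) :
    ∃ g : ℝ → ℝ → ℝ → ℝ → ℂ, Good (n + 1) g ∧
      ∀ a b c d : ℝ, HasDerivAt (fun x => f x b c d) (g a b c d) a := by
  induction hf with
  | add hf hg ihf ihg =>
      obtain ⟨g₁, hg₁, hd₁⟩ := ihf
      obtain ⟨g₂, hg₂, hd₂⟩ := ihg
      exact ⟨fun a b c d => g₁ a b c d + g₂ a b c d, Good.add hg₁ hg₂,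
        fun a b c d => (hd₁ a b c d).add (hd₂ a b c d)⟩
  | term t co i j k l n hdeg =>
      refine ⟨fun a b c d =>
          tFun t (co * (i:ℂ)) (i - 1) j k l a b c d
          + tFun t (2 * co) i j (k + 1) l a b c d
          + tFun t (-2 * I * co) i j k (l + 1) a b c d
          + tFun t (-2 * co) (i + 1) j k l a b c d
          + FdPart t co i j k l a b c d, ?_, ?_⟩
      · exact Good.add (Good.add (Good.add (Good.add
          (Good.term _ _ _ _ _ _ _ (by omega)) (Good.term _ _ _ _ _ _ _ (by omega)))
          (Good.term _ _ _ _ _ _ _ (by omega))) (Good.term _ _ _ _ _ _ _ (by omega)))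
          (FdPart_good t co hdeg)
      · intro a b c d
        have hm := (hasDerivAt_pow i ((a:ℂ))).comp_ofReal
        have h0 := (((hm.const_mul co).mul_const ((b:ℂ) ^ j)).mul_const
          ((c:ℂ) ^ k)).mul_const ((d:ℂ) ^ l)
        have hAll := (h0.mul (hasDerivAt_Ee_a a b c d)).mul (hasDerivAt_Fb_a t a b c d)
        have hfun : (fun x : ℝ => tFun t co i j k l x b c d)
            = fun x : ℝ => co * (x:ℂ) ^ i * (b:ℂ) ^ j * (c:ℂ) ^ k * (d:ℂ) ^ l
              * Ee x b c d * Fb t (Sv x b c d) := rfl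
        rw [hfun]
        refine hAll.congr_deriv ?_
        simp only [tFun, FdPart_eq, Pi.mul_apply]
        push_cast
        ring


lemma Good.derivB {n : ℕ} {f : ℝ → ℝ → ℝ → ℝ → ℂ} (hf : Good n f) :
    ∃ g : ℝ → ℝ → ℝ → ℝ → ℂ, Good (n + 1) g ∧
      ∀ a b c d : ℝ, HasDerivAt (fun x => f a x c d) (g a b c d) b := by
  induction hf with
  | add hf hg ihf ihg =>
      obtain ⟨g₁, hg₁, hd₁⟩ := ihf
      obtain ⟨g₂, hg₂, hd₂⟩ := ihg
      exact ⟨fun a b c d => g₁ a b c d + g₂ a b c d, Good.add hg₁ hg₂,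
        fun a b c d => (hd₁ a b c d).add (hd₂ a b c d)⟩
  | term t co i j k l n hdeg =>
      refine ⟨fun a b c d =>
          tFun t (co * (j:ℂ)) i (j - 1) k l a b c d
          + tFun t (2 * co) i j k (l + 1) a b c d
          + tFun t (2 * I * co) i j (k + 1) l a b c d
          + tFun t (-2 * co) i (j + 1) k l a b c d
          + FdPart t (I * co) i j k l a b c d, ?_, ?_⟩
      · exact Good.add (Good.add (Good.add (Good.add
          (Good.term _ _ _ _ _ _ _ (by omega)) (Good.term _ _ _ _ _ _ _ (by omega)))
          (Good.term _ _ _ _ _ _ _ (by omega))) (Good.term _ _ _ _ _ _ _ (by omega)))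
          (FdPart_good t (I * co) hdeg)
      · intro a b c d
        have hm := (hasDerivAt_pow j ((b:ℂ))).comp_ofReal
        have h0 := ((hm.const_mul (co * (a:ℂ) ^ i)).mul_const
          ((c:ℂ) ^ k)).mul_const ((d:ℂ) ^ l)
        have hAll := (h0.mul (hasDerivAt_Ee_b a b c d)).mul (hasDerivAt_Fb_b t a b c d)
        have hfun : (fun x : ℝ => tFun t co i j k l a x c d)
            = fun x : ℝ => co * (a:ℂ) ^ i * (x:ℂ) ^ j * (c:ℂ) ^ k * (d:ℂ) ^ l
              * Ee a x c d * Fb t (Sv a x c d) := rfl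
        rw [hfun]
        refine hAll.congr_deriv ?_
        simp only [tFun, FdPart_eq, Pi.mul_apply]
        push_cast
        ring

lemma Good.derivC {n : ℕ} {f : ℝ → ℝ → ℝ → ℝ → ℂ} (hf : Good n f) :
    ∃ g : ℝ → ℝ → ℝ → ℝ → ℂ, Good (n + 1) g ∧
      ∀ a b c d : ℝ, HasDerivAt (fun x => f a b x d) (g a b c d) c := by
  induction hf with
  | add hf hg ihf ihg =>
      obtain ⟨g₁, hg₁, hd₁⟩ := ihf
      obtain ⟨g₂, hg₂, hd₂⟩ := ihg
      exact ⟨fun a b c d => g₁ a b c d + g₂ a b c d, Good.add hg₁ hg₂,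
        fun a b c d => (hd₁ a b c d).add (hd₂ a b c d)⟩
  | term t co i j k l n hdeg =>
      refine ⟨fun a b c d =>
          tFun t (co * (k:ℂ)) i j (k - 1) l a b c d
          + tFun t (2 * co) (i + 1) j k l a b c d
          + tFun t (2 * I * co) i (j + 1) k l a b c d
          + tFun t (-2 * co) i j (k + 1) l a b c d
          + FdPart t co i j k l a b c d, ?_, ?_⟩
      · exact Good.add (Good.add (Good.add (Good.add
          (Good.term _ _ _ _ _ _ _ (by omega)) (Good.term _ _ _ _ _ _ _ (by omega)))
          (Good.term _ _ _ _ _ _ _ (by omega))) (Good.term _ _ _ _ _ _ _ (by omega)))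
          (FdPart_good t co hdeg)
      · intro a b c d
        have hm := (hasDerivAt_pow k ((c:ℂ))).comp_ofReal
        have h0 := (hm.const_mul (co * (a:ℂ) ^ i * (b:ℂ) ^ j)).mul_const ((d:ℂ) ^ l)
        have hAll := (h0.mul (hasDerivAt_Ee_c a b c d)).mul (hasDerivAt_Fb_c t a b c d)
        have hfun : (fun x : ℝ => tFun t co i j k l a b x d)
            = fun x : ℝ => co * (a:ℂ) ^ i * (b:ℂ) ^ j * (x:ℂ) ^ k * (d:ℂ) ^ l
              * Ee a b x d * Fb t (Sv a b x d) := rfl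
        rw [hfun]
        refine hAll.congr_deriv ?_
        simp only [tFun, FdPart_eq, Pi.mul_apply]
        push_cast
        ring

lemma Good.derivD {n : ℕ} {f : ℝ → ℝ → ℝ → ℝ → ℂ} (hf : Good n f) :
    ∃ g : ℝ → ℝ → ℝ → ℝ → ℂ, Good (n + 1) g ∧
      ∀ a b c d : ℝ, HasDerivAt (fun x => f a b c x) (g a b c d) d := by
  induction hf with
  | add hf hg ihf ihg =>
      obtain ⟨g₁, hg₁, hd₁⟩ := ihf
      obtain ⟨g₂, hg₂, hd₂⟩ := ihg
      exact ⟨fun a b c d => g₁ a b c d + g₂ a b c d, Good.add hg₁ hg₂,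
        fun a b c d => (hd₁ a b c d).add (hd₂ a b c d)⟩
  | term t co i j k l n hdeg =>
      refine ⟨fun a b c d =>
          tFun t (co * (l:ℂ)) i j k (l - 1) a b c d
          + tFun t (2 * co) i (j + 1) k l a b c d
          + tFun t (-2 * co) i j k (l + 1) a b c d
          + tFun t (-2 * I * co) (i + 1) j k l a b c d
          + FdPart t (-I * co) i j k l a b c d, ?_, ?_⟩
      · exact Good.add (Good.add (Good.add (Good.add
          (Good.term _ _ _ _ _ _ _ (by omega)) (Good.term _ _ _ _ _ _ _ (by omega)))
          (Good.term _ _ _ _ _ _ _ (by omega))) (Good.term _ _ _ _ _ _ _ (by omega)))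
          (FdPart_good t (-I * co) hdeg)
      · intro a b c d
        have hm := (hasDerivAt_pow l ((d:ℂ))).comp_ofReal
        have h0 := hm.const_mul (co * (a:ℂ) ^ i * (b:ℂ) ^ j * (c:ℂ) ^ k)
        have hAll := (h0.mul (hasDerivAt_Ee_d a b c d)).mul (hasDerivAt_Fb_d t a b c d)
        have hfun : (fun x : ℝ => tFun t co i j k l a b c x)
            = fun x : ℝ => co * (a:ℂ) ^ i * (b:ℂ) ^ j * (c:ℂ) ^ k * (x:ℂ) ^ l
              * Ee a b c x * Fb t (Sv a b c x) := rfl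
        rw [hfun]
        refine hAll.congr_deriv ?_
        simp only [tFun, FdPart_eq, Pi.mul_apply]
        push_cast
        ring


/-! ### Iterated derivatives -/

lemma Good.iterA {n : ℕ} {f : ℝ → ℝ → ℝ → ℝ → ℂ} (hf : Good n f) (m : ℕ) :
    ∃ g : ℝ → ℝ → ℝ → ℝ → ℂ, Good (n + m) g ∧
      ∀ a b c d : ℝ, iteratedDeriv m (fun x => f x b c d) a = g a b c d := by
  induction m with
  | zero => exact ⟨f, hf, fun a b c d => by simp [iteratedDeriv_zero]⟩
  | succ m ih =>
      obtain ⟨g, hg, heq⟩ := ih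
      obtain ⟨g', hg', hd⟩ := hg.derivA
      refine ⟨g', by rw [show n + (m + 1) = n + m + 1 by omega]; exact hg', fun a b c d => ?_⟩
      rw [iteratedDeriv_succ,
        show (iteratedDeriv m fun x => f x b c d) = fun x => g x b c d from
          funext fun x => heq x b c d]
      exact (hd a b c d).deriv

lemma Good.iterB {n : ℕ} {f : ℝ → ℝ → ℝ → ℝ → ℂ} (hf : Good n f) (m : ℕ) :
    ∃ g : ℝ → ℝ → ℝ → ℝ → ℂ, Good (n + m) g ∧
      ∀ a b c d : ℝ, iteratedDeriv m (fun x => f a x c d) b = g a b c d := by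
  induction m with
  | zero => exact ⟨f, hf, fun a b c d => by simp [iteratedDeriv_zero]⟩
  | succ m ih =>
      obtain ⟨g, hg, heq⟩ := ih
      obtain ⟨g', hg', hd⟩ := hg.derivB
      refine ⟨g', by rw [show n + (m + 1) = n + m + 1 by omega]; exact hg', fun a b c d => ?_⟩
      rw [iteratedDeriv_succ,
        show (iteratedDeriv m fun x => f a x c d) = fun x => g a x c d from
          funext fun x => heq a x c d]
      exact (hd a b c d).deriv

lemma Good.iterC {n : ℕ} {f : ℝ → ℝ → ℝ → ℝ → ℂ} (hf : Good n f) (m : ℕ) :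
    ∃ g : ℝ → ℝ → ℝ → ℝ → ℂ, Good (n + m) g ∧
      ∀ a b c d : ℝ, iteratedDeriv m (fun x => f a b x d) c = g a b c d := by
  induction m with
  | zero => exact ⟨f, hf, fun a b c d => by simp [iteratedDeriv_zero]⟩
  | succ m ih =>
      obtain ⟨g, hg, heq⟩ := ih
      obtain ⟨g', hg', hd⟩ := hg.derivC
      refine ⟨g', by rw [show n + (m + 1) = n + m + 1 by omega]; exact hg', fun a b c d => ?_⟩
      rw [iteratedDeriv_succ,
        show (iteratedDeriv m fun x => f a b x d) = fun x => g a b x d from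
          funext fun x => heq a b x d]
      exact (hd a b c d).deriv

lemma Good.iterD {n : ℕ} {f : ℝ → ℝ → ℝ → ℝ → ℂ} (hf : Good n f) (m : ℕ) :
    ∃ g : ℝ → ℝ → ℝ → ℝ → ℂ, Good (n + m) g ∧
      ∀ a b c d : ℝ, iteratedDeriv m (fun x => f a b c x) d = g a b c d := by
  induction m with
  | zero => exact ⟨f, hf, fun a b c d => by simp [iteratedDeriv_zero]⟩
  | succ m ih =>
      obtain ⟨g, hg, heq⟩ := ih
      obtain ⟨g', hg', hd⟩ := hg.derivD
      refine ⟨g', by rw [show n + (m + 1) = n + m + 1 by omega]; exact hg', fun a b c d => ?_⟩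
      rw [iteratedDeriv_succ,
        show (iteratedDeriv m fun x => f a b c x) = fun x => g a b c x from
          funext fun x => heq a b c x]
      exact (hd a b c d).deriv

lemma good_edgeKernelReal : Good 0 edgeKernelReal := by
  have heq : edgeKernelReal = tFun true (2⁻¹ : ℂ) 0 0 0 0 := by
    funext a b c d
    simp only [edgeKernelReal, edgeKernel, tFun, Fb, if_true, pow_zero]
    show Ee a b c d * erfc (Sv a b c d) / 2 = _
    ring
  rw [heq]
  exact Good.term _ _ _ _ _ _ _ (by omega)

end EdgeAux

/-- For every multi-index `(α₁,α₂,α₃,α₄)` there is `C > 0` such that the mixed partial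
derivative `∂^{α₁}_{Re ξ} ∂^{α₂}_{Im ξ} ∂^{α₃}_{Re η} ∂^{α₄}_{Im η} k(ξ,η)` is bounded in
modulus by `C (1 + |ξ| + |η|)^{α₁+α₂+α₃+α₄}` for all `ξ, η ∈ ℂ`. -/
theorem edgeKernel_derivative_bounds (α₁ α₂ α₃ α₄ : ℕ) :
    ∃ C > 0, ∀ ξ η : ℂ,
      norm
        (iteratedDeriv α₁ (fun a =>
          iteratedDeriv α₂ (fun b =>
            iteratedDeriv α₃ (fun c =>
              iteratedDeriv α₄ (fun d => edgeKernelReal a b c d) η.im) η.re) ξ.im) ξ.re)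
      ≤ C * (1 + norm ξ + norm η) ^ (α₁ + α₂ + α₃ + α₄) := by
  obtain ⟨g₄, hg₄, h₄⟩ := EdgeAux.good_edgeKernelReal.iterD α₄
  obtain ⟨g₃, hg₃, h₃⟩ := hg₄.iterC α₃
  obtain ⟨g₂, hg₂, h₂⟩ := hg₃.iterB α₂
  obtain ⟨g₁, hg₁, h₁⟩ := hg₂.iterA α₁
  obtain ⟨C, hC, hbound⟩ := hg₁.bound
  refine ⟨C, hC, fun ξ η => ?_⟩
  have e1 : (fun a => iteratedDeriv α₂ (fun b => iteratedDeriv α₃ (fun c =>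
      iteratedDeriv α₄ (fun d => edgeKernelReal a b c d) η.im) η.re) ξ.im)
      = fun a => g₂ a ξ.im η.re η.im := by
    funext a
    have e2 : (fun b => iteratedDeriv α₃ (fun c =>
        iteratedDeriv α₄ (fun d => edgeKernelReal a b c d) η.im) η.re)
        = fun b => g₃ a b η.re η.im := by
      funext b
      have e3 : (fun c => iteratedDeriv α₄ (fun d => edgeKernelReal a b c d) η.im)
          = fun c => g₄ a b c η.im := funext fun c => h₄ a b c η.im
      rw [e3]
      exact h₃ a b η.re η.im
    rw [e2]
    exact h₂ a ξ.im η.re η.im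
  rw [e1, h₁ ξ.re ξ.im η.re η.im]
  have hfin := hbound ξ.re ξ.im η.re η.im
  rw [show (0 + α₄ + α₃ + α₂ + α₁) = α₁ + α₂ + α₃ + α₄ by omega] at hfin
  simp only [Complex.eta] at hfin
  exact hfin
end
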